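/- arXiv:hep-th/0107050 — 6 statements merged into one kernel-verified Lean document; each statement's English description precedes it below -/
import Mathlib

section
/- Theorem (unbraiding): Let A be an associative algebra, and let M(λ) be a 2×2 matrix with entries in A depending on a parameter λ, satisfying the braided Yang–Baxter relation R_{ab}(λ/λ') M_a(λ) Z_{ab}^{-1} M_b(λ') = M_b(λ') Z_{ba}^{-1} M_a(λ) R_{ab}(λ/λ') on the tensor product of two auxiliary spaces. Suppose there exists an invertible 2×2 matrix D with entries in A such that (i) M_a(λ) = D_b M_a(λ) D_b^{-1} Z_{ab}, (ii) [D_a D_b, R_{ab}(ξ)] = 0 for all ξ, (iii) [D_a, D_b] = 0, and suppose the numerical matrices satisfy Z_{ab} R_{ab}(ξ) = R_{ab}(ξ) Z_{ba}. Then the matrix M̃(λ) = D^{-1} M(λ) D satisfies the (unbraided) Yang–Baxter relation R_{ab}(λ/λ') M̃_a(λ) M̃_b(λ') = M̃_b(λ') M̃_a(λ) R_{ab}(λ/λ'). -/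
open Matrix Complex

noncomputable section

abbrev M2 (A : Type*) := Matrix (Fin 2) (Fin 2) A
abbrev M4 (A : Type*) := Matrix (Fin 2 × Fin 2) (Fin 2 × Fin 2) A

/-- `X ⊗ Id` : the embedding of a 2×2 matrix into auxiliary space `a`. -/
def embA {A : Type*} [Zero A] (X : M2 A) : M4 A :=
  fun p q => if p.2 = q.2 then X p.1 q.1 else 0

/-- `Id ⊗ X` : the embedding of a 2×2 matrix into auxiliary space `b`. -/
def embB {A : Type*} [Zero A] (X : M2 A) : M4 A :=
  fun p q => if p.1 = q.1 then X p.2 q.2 else 0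

/-- The trigonometric R-matrix. -/
def Rmat (q ξ : ℂ) : M4 ℂ :=
  fun p r =>
    if p = r then (if p.1 = p.2 then 1 else (ξ⁻¹ - ξ) / (q⁻¹ * ξ⁻¹ - q * ξ))
    else if p.1 = r.2 ∧ p.2 = r.1 then (q⁻¹ - q) / (q⁻¹ * ξ⁻¹ - q * ξ)
    else 0

/-- The R-matrix with (scalar) entries viewed inside the algebra `A`. -/
def RA (A : Type*) [Ring A] [Algebra ℂ A] (q ξ : ℂ) : M4 A :=
  (Rmat q ξ).map (algebraMap ℂ A)

/-- Z = diag(q^{-1/2}, q^{1/2}, q^{1/2}, q^{-1/2}), written via `s = q^{1/2}`. -/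
def Zmat (s : ℂ) : M4 ℂ :=
  Matrix.diagonal (fun p => if p.1 = p.2 then s⁻¹ else s)

/-- The permutation (swap) matrix on ℂ²⊗ℂ². -/
def Pswap : M4 ℂ := fun p q => if p.1 = q.2 ∧ p.2 = q.1 then 1 else 0

/-!
`D_a D_b` commutes with `R` by (ii), and conjugating by it sends `D_a⁻¹ M_a D_a` to `M_a Z_{ab}⁻¹`
(by (i) and (iii)) and `D_b⁻¹ M_b D_b` to `M_b Z_{ba}⁻¹` (by (i) transported through the swap of
the two auxiliary spaces). So the unbraided relation for `M̃` is equivalent to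
`R (M_a Z_{ab}⁻¹) (M_b Z_{ba}⁻¹) = (M_b Z_{ba}⁻¹) (M_a Z_{ab}⁻¹) R`, which is the braided relation
once `R Z_{ba}⁻¹ = Z_{ab}⁻¹ R` moves the last `Z` across `R`. This is an identity in any monoid in
which `D_a`, `D_b`, `Z_{ab}`, `Z_{ba}` are units.
-/

section Monoid

variable {M : Type*} [Monoid M]

theorem semiconjBy_mul_units_conj (a b : Mˣ) (x : M) :
    SemiconjBy (↑b * ↑a : M) (↑a⁻¹ * x * a) (b * x * ↑b⁻¹) := by
  simp only [SemiconjBy, mul_assoc, Units.mul_inv_cancel_left, Units.inv_mul_cancel_left]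

theorem yangBaxter_conj_of_braided (R Ma Mb : M) (a b Z Zb : Mˣ)
    (hbraid : R * Ma * ↑Z⁻¹ * Mb = Mb * ↑Zb⁻¹ * Ma * R)
    (hMa : Ma = b * Ma * ↑b⁻¹ * Z) (hMb : Mb = a * Mb * ↑a⁻¹ * Zb)
    (hR : Commute (↑a * ↑b : M) R) (hab : Commute (a : M) b) (hZR : Z * R = R * Zb) :
    R * (↑a⁻¹ * Ma * a) * (↑b⁻¹ * Mb * b) = ↑b⁻¹ * Mb * b * (↑a⁻¹ * Ma * a) * R := by
  have hA : SemiconjBy (↑a * ↑b : M) (↑a⁻¹ * Ma * a) (Ma * ↑Z⁻¹) := by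
    rw [hab.eq, ← (Units.eq_mul_inv_iff_mul_eq Z).mpr hMa.symm]
    exact semiconjBy_mul_units_conj a b Ma
  have hB : SemiconjBy (↑a * ↑b : M) (↑b⁻¹ * Mb * b) (Mb * ↑Zb⁻¹) := by
    rw [← (Units.eq_mul_inv_iff_mul_eq Zb).mpr hMb.symm]
    exact semiconjBy_mul_units_conj b a Mb
  have hRZ : R * ↑Zb⁻¹ = ↑Z⁻¹ * R := by
    rw [Units.mul_inv_eq_iff_eq_mul, mul_assoc, ← hZR, Units.inv_mul_cancel_left]
  have hbraid' : R * (Ma * ↑Z⁻¹) * (Mb * ↑Zb⁻¹) = Mb * ↑Zb⁻¹ * (Ma * ↑Z⁻¹) * R :=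
    calc R * (Ma * ↑Z⁻¹) * (Mb * ↑Zb⁻¹) = R * Ma * ↑Z⁻¹ * Mb * ↑Zb⁻¹ := by simp only [mul_assoc]
      _ = Mb * ↑Zb⁻¹ * Ma * (R * ↑Zb⁻¹) := by rw [hbraid]; simp only [mul_assoc]
      _ = Mb * ↑Zb⁻¹ * (Ma * ↑Z⁻¹) * R := by rw [hRZ]; simp only [mul_assoc]
  have hR' : SemiconjBy (↑a * ↑b : M) R R := hR
  apply (Units.mul_right_inj (a * b)).mp
  rw [Units.val_mul, ((hR'.mul_right hA).mul_right hB).eq, ((hB.mul_right hA).mul_right hR').eq,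
    hbraid']

end Monoid

section Embeddings

variable {A : Type*}

theorem embA_eq_blockDiagonal [Zero A] (X : M2 A) : embA X = blockDiagonal fun _ => X := rfl

theorem reindex_prodComm_embA [Zero A] (X : M2 A) :
    reindex (Equiv.prodComm _ _) (Equiv.prodComm _ _) (embA X) = embB X := rfl

theorem reindex_prodComm_embB [Zero A] (X : M2 A) :
    reindex (Equiv.prodComm _ _) (Equiv.prodComm _ _) (embB X) = embA X := rfl

theorem embA_one [Zero A] [One A] : embA (1 : M2 A) = 1 := blockDiagonal_one

theorem embA_mul [NonUnitalNonAssocSemiring A] (X Y : M2 A) :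
    embA (X * Y) = embA X * embA Y := by
  simp only [embA_eq_blockDiagonal, blockDiagonal_mul]

theorem embB_mul [NonUnitalNonAssocSemiring A] (X Y : M2 A) :
    embB (X * Y) = embB X * embB Y := by
  simp only [← reindex_prodComm_embA, embA_mul, ← coe_reindexRingEquiv, map_mul]

theorem embB_eq_of_embA_eq [NonUnitalNonAssocSemiring A] {X D Dinv : M2 A} {W : M4 A}
    (h : embA X = embB D * embA X * embB Dinv * W) :
    embB X = embA D * embB X * embA Dinv * reindex (Equiv.prodComm _ _) (Equiv.prodComm _ _) W := by
  simpa only [map_mul, coe_reindexRingEquiv, reindex_prodComm_embA, reindex_prodComm_embB]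
    using congrArg (reindexRingEquiv A (Equiv.prodComm (Fin 2) (Fin 2))) h

def embAHom [Semiring A] : M2 A →* M4 A where
  toFun := embA
  map_one' := embA_one
  map_mul' := embA_mul

def embBHom [Semiring A] : M2 A →* M4 A where
  toFun := embB
  map_one' := by rw [← reindex_prodComm_embA, embA_one, reindex_apply, submatrix_one_equiv]
  map_mul' := embB_mul

end Embeddings

theorem Pswap_mul_mul_Pswap (X : M4 ℂ) :
    Pswap * X * Pswap = reindex (Equiv.prodComm _ _) (Equiv.prodComm _ _) X := by
  have hP : Pswap = (1 : M4 ℂ).submatrix (Equiv.refl _) (Equiv.prodComm _ _) := by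
    ext p q
    simp only [Pswap, submatrix_apply, one_apply, Prod.ext_iff, Equiv.refl_apply,
      Equiv.prodComm_apply, Prod.fst_swap, Prod.snd_swap]
  rw [hP, one_submatrix_mul, mul_submatrix_one]
  rfl

/-- Unbraiding theorem: a matrix satisfying the braided Yang–Baxter relation,
conjugated by a matrix `D` satisfying conditions (i)–(iii), satisfies the usual
Yang–Baxter relation, provided `Z_{ab} R_{ab}(ξ) = R_{ab}(ξ) Z_{ba}`. -/
theorem unbraiding {A : Type*} [Ring A] [Algebra ℂ A]
    (M : ℂ → M2 A) (R : ℂ → M4 ℂ) (Z Zinv : M4 ℂ)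
    (hZ : Z * Zinv = 1) (hZ' : Zinv * Z = 1)
    (D Dinv : M2 A) (hD : D * Dinv = 1) (hD' : Dinv * D = 1)
    -- braided Yang-Baxter relation, with Z_{ba} = P Z_{ab} P
    (hbraid : ∀ lam lam' : ℂ,
      (R (lam / lam')).map (algebraMap ℂ A) * embA (M lam) *
          (Zinv.map (algebraMap ℂ A)) * embB (M lam')
        = embB (M lam') * ((Pswap * Zinv * Pswap).map (algebraMap ℂ A)) *
            embA (M lam) * (R (lam / lam')).map (algebraMap ℂ A))
    -- condition (i): M_a(λ) = D_b M_a(λ) D_b⁻¹ Z_{ab}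
    (hcond1 : ∀ lam : ℂ,
      embA (M lam) = embB D * embA (M lam) * embB Dinv * (Z.map (algebraMap ℂ A)))
    -- condition (ii): [D_a D_b, R_{ab}(ξ)] = 0
    (hcond2 : ∀ ξ : ℂ,
      embA D * embB D * (R ξ).map (algebraMap ℂ A)
        = (R ξ).map (algebraMap ℂ A) * (embA D * embB D))
    -- condition (iii): [D_a, D_b] = 0
    (hcond3 : embA D * embB D = embB D * embA D)
    -- compatibility: Z_{ab} R_{ab}(ξ) = R_{ab}(ξ) Z_{ba}
    (hcond4 : ∀ ξ : ℂ, Z * R ξ = R ξ * (Pswap * Z * Pswap)) :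
    ∀ lam lam' : ℂ,
      (R (lam / lam')).map (algebraMap ℂ A) * embA (Dinv * M lam * D) *
          embB (Dinv * M lam' * D)
        = embB (Dinv * M lam' * D) * embA (Dinv * M lam * D) *
            (R (lam / lam')).map (algebraMap ℂ A) := by
  intro lam lam'
  rw [Pswap_mul_mul_Pswap] at hbraid hcond4
  let φ : M4 ℂ →+* M4 A := (algebraMap ℂ A).mapMatrix
  let swap : M4 ℂ →+* M4 ℂ := reindexRingEquiv ℂ (Equiv.prodComm (Fin 2) (Fin 2))
  let Dunit : (M2 A)ˣ := ⟨D, Dinv, hD, hD'⟩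
  let Zunit : (M4 ℂ)ˣ := ⟨Z, Zinv, hZ, hZ'⟩
  have hZR : φ Z * φ (R (lam / lam')) = φ (R (lam / lam')) * φ (swap Z) := by
    rw [← map_mul, ← map_mul, hcond4]; rfl
  have key := yangBaxter_conj_of_braided (φ (R (lam / lam'))) (embA (M lam)) (embB (M lam'))
    (Units.map embAHom Dunit) (Units.map embBHom Dunit) (Units.map φ.toMonoidHom Zunit)
    (Units.map (φ.comp swap).toMonoidHom Zunit)
    (hbraid lam lam') (hcond1 lam) (embB_eq_of_embA_eq (hcond1 lam')) (hcond2 _) hcond3 hZR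
  simp only [embA_mul, embB_mul]
  exact key
end
end

section
/- Let A be an algebra with invertible elements u, v satisfying u v = q v u (q a nonzero scalar). Then the 'right' Lax matrix L̄(λ) = [[u, δλ⁻¹ v],[δλ⁻¹ v^{-1}, u^{-1}]] satisfies R_{ab}(λ/λ') L̄_a(λ) L̄_b(λ') = L̄_b(λ') L̄_a(λ) R_{ab}(λ/λ') with the same trigonometric R-matrix R, but with q replaced by q^{-1} relative to the left Lax matrix; equivalently, the matrix L̃̄_m(λ) = q^{1/4}[[e^{ip_m}, Δλ e^{i(2x_m - p_m)}],[Δλ e^{-i(2x_m - p_m)}, e^{-ip_m}]] built from a Heisenberg pair satisfies the Yang–Baxter relation evaluated at inverse spectral parameters: R_{ab}(λ/λ') L̃̄_a(1/λ) L̃̄_b(1/λ') = L̃̄_b(1/λ') L̃̄_a(1/λ) R_{ab}(λ/λ'). -/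
open Matrix Complex

noncomputable section

private lemma embA_smul {A : Type*} [Ring A] (c : ℂ) [Algebra ℂ A] (X : M2 A) :
    embA (c • X) = c • embA X := by
  ext p r
  simp only [embA, Matrix.smul_apply]
  split <;> simp

private lemma embB_smul {A : Type*} [Ring A] (c : ℂ) [Algebra ℂ A] (X : M2 A) :
    embB (c • X) = c • embB X := by
  ext p r
  simp only [embB, Matrix.smul_apply]
  split <;> simp

set_option maxHeartbeats 2000000 in
lemma core {A : Type*} [Ring A] [Algebra ℂ A] (w : ℂ) (hw : w ≠ 0)
    (u v ui vi : A)
    (hu : u * ui = 1) (hu' : ui * u = 1) (hv : v * vi = 1) (hv' : vi * v = 1)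
    (hweyl : u * v = w • (v * u)) (δ lam lam' : ℂ)
    (hlam : lam ≠ 0) (hlam' : lam' ≠ 0)
    (hden : w * (lam / lam')⁻¹ - w⁻¹ * (lam / lam') ≠ 0) :
    RA A w⁻¹ (lam / lam') * embA !![u, (δ * lam⁻¹) • v; (δ * lam⁻¹) • vi, ui]
        * embB !![u, (δ * lam'⁻¹) • v; (δ * lam'⁻¹) • vi, ui]
      = embB !![u, (δ * lam'⁻¹) • v; (δ * lam'⁻¹) • vi, ui]
        * embA !![u, (δ * lam⁻¹) • v; (δ * lam⁻¹) • vi, ui]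
        * RA A w⁻¹ (lam / lam') := by
  have algl : ∀ (c : ℂ) (x : A), algebraMap ℂ A c * x = c • x :=
    fun c x => (Algebra.smul_def c x).symm
  have algr : ∀ (c : ℂ) (x : A), x * algebraMap ℂ A c = c • x :=
    fun c x => by rw [← Algebra.commutes, ← Algebra.smul_def]
  have hc2 : ∀ x : A, ui * (u * x) = x := fun x => by rw [← mul_assoc, hu', one_mul]
  have hc4 : ∀ x : A, vi * (v * x) = x := fun x => by rw [← mul_assoc, hv', one_mul]
  have hvu : v * u = w⁻¹ • (u * v) := by
    rw [hweyl, smul_smul, inv_mul_cancel₀ hw, one_smul]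
  have hviu : vi * u = w • (u * vi) := by
    calc vi * u = vi * (u * (v * vi)) := by rw [hv, mul_one]
      _ = vi * ((u * v) * vi) := by rw [mul_assoc]
      _ = vi * ((w • (v * u)) * vi) := by rw [hweyl]
      _ = w • (vi * (v * (u * vi))) := by
          simp only [smul_mul_assoc, mul_smul_comm, mul_assoc]
      _ = w • (u * vi) := by rw [hc4]
  have huvi : u * vi = w⁻¹ • (vi * u) := by
    rw [hviu, smul_smul, inv_mul_cancel₀ hw, one_smul]
  have hvui : v * ui = w • (ui * v) := by
    calc v * ui = ui * (u * (v * ui)) := (hc2 _).symm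
      _ = ui * ((u * v) * ui) := by rw [mul_assoc]
      _ = ui * ((w • (v * u)) * ui) := by rw [hweyl]
      _ = w • (ui * (v * (u * ui))) := by
          simp only [smul_mul_assoc, mul_smul_comm, mul_assoc]
      _ = w • (ui * v) := by rw [hu, mul_one]
  have hviui : vi * ui = w⁻¹ • (ui * vi) := by
    calc vi * ui = ui * (u * (vi * ui)) := (hc2 _).symm
      _ = ui * ((u * vi) * ui) := by rw [mul_assoc]
      _ = ui * ((w⁻¹ • (vi * u)) * ui) := by rw [huvi]
      _ = w⁻¹ • (ui * (vi * (u * ui))) := by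
          simp only [smul_mul_assoc, mul_smul_comm, mul_assoc]
      _ = w⁻¹ • (ui * vi) := by rw [hu, mul_one]
  have hkey : w * (lam / lam')⁻¹ - w⁻¹ * (lam / lam')
      = (w * w * (lam' * lam') - lam * lam) / (w * lam * lam') := by
    field_simp
  have hD : w * w * (lam' * lam') - lam * lam ≠ 0 := fun h => hden (by rw [hkey, h, zero_div])
  have hb : ((lam / lam')⁻¹ - lam / lam') / (w * (lam / lam')⁻¹ - w⁻¹ * (lam / lam'))
      = w * (lam' * lam' - lam * lam) / (w * w * (lam' * lam') - lam * lam) := by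
    rw [hkey, div_div_eq_mul_div, div_eq_div_iff hD hD]
    field_simp
  have hc : (w - w⁻¹) / (w * (lam / lam')⁻¹ - w⁻¹ * (lam / lam'))
      = (w * w - 1) * (lam * lam') / (w * w * (lam' * lam') - lam * lam) := by
    rw [hkey, div_div_eq_mul_div, div_eq_div_iff hD hD]
    field_simp
  have hD2 : lam' ^ 2 * w ^ 2 - lam ^ 2 ≠ 0 := by
    intro h; apply hD; linear_combination h
  have hD3 : w ^ 2 * lam' ^ 2 - lam ^ 2 ≠ 0 := by
    intro h; apply hD; linear_combination h
  ext ⟨i, j⟩ ⟨k, l⟩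
  fin_cases i <;> fin_cases j <;> fin_cases k <;> fin_cases l <;>
    simp only [RA, Rmat, embA, embB, Matrix.mul_apply, Matrix.map_apply,
      Fintype.sum_prod_type, Fin.sum_univ_two, Fin.isValue, Fin.zero_eta, Fin.mk_one, Fin.reduceEq, zero_ne_one, one_ne_zero,
      Matrix.cons_val', Matrix.cons_val_zero, Matrix.cons_val_one,
      Matrix.head_cons, Matrix.head_fin_const, Matrix.empty_val',
      Matrix.cons_val_fin_one, Matrix.of_apply, one_smul, zero_smul,
      Prod.mk.injEq, Prod.ext_iff, and_true, true_and, and_false, false_and,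
      if_true, if_false, reduceIte, map_zero, _root_.map_one,
      zero_mul, mul_zero, add_zero, zero_add, one_mul, mul_one,
      algl, algr, smul_mul_assoc, mul_smul_comm, smul_smul,
      hu, hu', hv, hv', hvu, hviu, hvui, hviui, inv_inv, smul_zero, hb, hc]
  all_goals match_scalars
  all_goals field_simp
  all_goals ring

/-- The right Lax matrix `L̄(λ) = [[u, δλ⁻¹ v],[δλ⁻¹ v⁻¹, u⁻¹]]` satisfies the
Yang–Baxter relation with the trigonometric R-matrix with `q` replaced by `q⁻¹`;
equivalently the operator `L̃̄_m(λ) = q^{1/4}[[e^{ip}, Δλ e^{i(2x-p)}],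
[Δλ e^{-i(2x-p)}, e^{-ip}]]` satisfies the Yang–Baxter relation at inverted
spectral parameters. -/
theorem right_lax_yang_baxter {A : Type*} [Ring A] [Algebra ℂ A]
    (q : ℂ) (hq : q ≠ 0)
    (u v ui vi : A)
    (hu : u * ui = 1) (hu' : ui * u = 1) (hv : v * vi = 1) (hv' : vi * v = 1)
    (hweyl : u * v = q • (v * u))
    (δ : ℂ)
    -- the Heisenberg realization: E a b = e^{i(a x + b p)}, [x,p] = iπβ²/2
    (β : ℝ) (hqβ : q = Complex.exp (-(Real.pi * β ^ 2) * Complex.I))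
    (E : ℂ → ℂ → A)
    (hE0 : E 0 0 = 1)
    (hEmul : ∀ a b c d, E a b * E c d =
      Complex.exp (-(a * d - b * c) * (Real.pi * β ^ 2) * Complex.I / 4) •
        E (a + c) (b + d))
    (Δ : ℂ) :
    let Lbar : ℂ → M2 A := fun z => !![u, (δ * z⁻¹) • v; (δ * z⁻¹) • vi, ui]
    let Lbtil : ℂ → M2 A := fun z =>
      Complex.exp (-(Real.pi * β ^ 2) * Complex.I / 4) •
        !![E 0 1, (Δ * z) • E 2 (-1); (Δ * z) • E (-2) 1, E 0 (-1)]
    ∀ lam lam' : ℂ, lam ≠ 0 → lam' ≠ 0 →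
      q * (lam / lam')⁻¹ - q⁻¹ * (lam / lam') ≠ 0 →
      q⁻¹ * (lam / lam')⁻¹ - q * (lam / lam') ≠ 0 →
      (RA A q⁻¹ (lam / lam') * embA (Lbar lam) * embB (Lbar lam')
        = embB (Lbar lam') * embA (Lbar lam) * RA A q⁻¹ (lam / lam')) ∧
      (RA A q (lam / lam') * embA (Lbtil lam⁻¹) * embB (Lbtil lam'⁻¹)
        = embB (Lbtil lam'⁻¹) * embA (Lbtil lam⁻¹) * RA A q (lam / lam')) := by
  intro Lbar Lbtil lam lam' hlam hlam' hd1 hd2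
  constructor
  · exact core q hq u v ui vi hu hu' hv hv' hweyl δ lam lam' hlam hlam' hd1
  · have hUU : E 0 1 * E 0 (-1) = 1 := by
      rw [hEmul]; norm_num [hE0]
    have hUiU : E 0 (-1) * E 0 1 = 1 := by
      rw [hEmul]; norm_num [hE0]
    have hVV : E 2 (-1) * E (-2) 1 = 1 := by
      rw [hEmul]; norm_num [hE0]
    have hViV : E (-2) 1 * E 2 (-1) = 1 := by
      rw [hEmul]; norm_num [hE0]
    have hUV : E 0 1 * E 2 (-1) = q⁻¹ • (E 2 (-1) * E 0 1) := by
      rw [hEmul, hEmul, hqβ, ← Complex.exp_neg, smul_smul, ← Complex.exp_add]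
      norm_num
      congr 1
      ring
    have key := core q⁻¹ (inv_ne_zero hq) (E 0 1) (E 2 (-1)) (E 0 (-1)) (E (-2) 1)
      hUU hUiU hVV hViV hUV Δ lam lam' hlam hlam' (by rw [inv_inv]; exact hd2)
    rw [inv_inv] at key
    simp only [Lbtil, embA_smul, embB_smul, Matrix.mul_smul, Matrix.smul_mul, smul_smul]
    rw [key]
end
end

section
/- Off-diagonal entries acquire vertex operator dressing: under the unbraiding map for the left monodromy matrix, B(λ) = q^{1/2} e^{2ix_1} B̃(λ) and C(λ) = q^{1/2} e^{-2ix_1} C̃(λ). -/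
open Matrix Complex

noncomputable section

/- Setting: `E m a b` stands for `e^{i(a·x_m + b·p_m)}` for `N` independent
Heisenberg pairs with `[x_m, p_n] = (iπβ²/2)δ_{mn}`, `q = e^{-iπβ²}`. -/
/-- Under the unbraiding map `M(λ) = D₁ M̃(λ) D₁⁻¹`, the off-diagonal entries
acquire a vertex operator dressing:
`B(λ) = q^{1/2} e^{2ix_1} B̃(λ)` and `C(λ) = q^{1/2} e^{-2ix_1} C̃(λ)`. -/
theorem offdiagonal_entries_dressing {A : Type*} [Ring A] [Algebra ℂ A]
    (N : ℕ) (hN : 1 ≤ N) (β : ℝ) (E : ℕ → ℂ → ℂ → A)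
    (hE0 : ∀ m, E m 0 0 = 1)
    (hEmul : ∀ m a b c d, E m a b * E m c d =
      Complex.exp (-(a * d - b * c) * (Real.pi * β ^ 2) * Complex.I / 4) •
        E m (a + c) (b + d))
    (hEcomm : ∀ m n a b c d, m ≠ n → E m a b * E n c d = E n c d * E m a b)
    (Δ : ℂ) :
    let qi4 : ℂ := Complex.exp ((Real.pi * β ^ 2) * Complex.I / 4)
    let s : ℂ := Complex.exp (-(Real.pi * β ^ 2) * Complex.I / 2)
    let Ltil : ℕ → ℂ → M2 A := fun m lam =>
      qi4 • !![E m 0 1, (Δ * lam) • E m (-2) (-1);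
               (Δ * lam) • E m 2 1, E m 0 (-1)]
    let Mtil : ℂ → M2 A := fun lam =>
      ((List.range N).map (fun k => Ltil (N - k) lam)).prod
    let D1 : M2 A := !![E 1 1 0, 0; 0, E 1 (-1) 0]
    let D1inv : M2 A := !![E 1 (-1) 0, 0; 0, E 1 1 0]
    let M : ℂ → M2 A := fun lam => D1 * Mtil lam * D1inv
    ∀ lam : ℂ,
      M lam 0 1 = s • (E 1 2 0 * Mtil lam 0 1) ∧
      M lam 1 0 = s • (E 1 (-2) 0 * Mtil lam 1 0) := by
  intro qi4 s Ltil Mtil D1 D1inv M lam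
  obtain ⟨n, rfl⟩ : ∃ n, N = n + 1 := ⟨N - 1, (Nat.succ_pred_eq_of_pos hN).symm⟩
  -- the prefix product over sites n+1, ..., 2
  set P : M2 A := ((List.range n).map (fun k => Ltil (n + 1 - k) lam)).prod with hPdef
  have hMtil : Mtil lam = P * Ltil 1 lam := by
    have h1 : n + 1 - n = 1 := by omega
    simp [Mtil, List.range_succ, hPdef, h1]
  -- entries of Ltil m commute with site-1 operators when m ≠ 1
  have hEntries : ∀ m, m ≠ 1 → ∀ i j (c d : ℂ),
      Ltil m lam i j * E 1 c d = E 1 c d * Ltil m lam i j := by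
    intro m hm i j c d
    have hc : ∀ a b : ℂ, E m a b * E 1 c d = E 1 c d * E m a b :=
      fun a b => hEcomm m 1 a b c d hm
    fin_cases i <;> fin_cases j <;>
      simp [Ltil, smul_mul_assoc, mul_smul_comm, hc]
  have hCprod : ∀ (l : List (M2 A)),
      (∀ X ∈ l, ∀ i j (c d : ℂ), X i j * E 1 c d = E 1 c d * X i j) →
      ∀ i j (c d : ℂ), l.prod i j * E 1 c d = E 1 c d * l.prod i j := by
    intro l
    induction l with
    | nil =>
      intro _ i j c d
      by_cases h : i = j <;> simp [Matrix.one_apply, h]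
    | cons X t ih =>
      intro h i j c d
      have hX := h X List.mem_cons_self
      have ht := ih (fun Y hY => h Y (List.mem_cons_of_mem _ hY))
      simp only [List.prod_cons, Matrix.mul_apply, Finset.sum_mul, Finset.mul_sum]
      refine Finset.sum_congr rfl fun k _ => ?_
      rw [mul_assoc, ht, ← mul_assoc, hX, mul_assoc]
  have hP : ∀ i j (c d : ℂ), P i j * E 1 c d = E 1 c d * P i j := by
    refine hCprod _ ?_
    intro X hX
    obtain ⟨k, hk, rfl⟩ := List.mem_map.1 hX
    exact hEntries _ (by have := List.mem_range.1 hk; omega)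
  -- key scalar commutation relations
  have key01 : ∀ a : ℂ, E 1 a (-1) * E 1 1 0 = s • (E 1 1 0 * E 1 a (-1)) := by
    intro a
    rw [hEmul, hEmul, smul_smul]
    have h1 : (a + 1 : ℂ) = 1 + a := by ring
    have h2 : ((-1 : ℂ) + 0) = 0 + -1 := by ring
    rw [h1, h2, ← Complex.exp_add]
    congr 1
    ring
  have key10 : ∀ a : ℂ, E 1 a 1 * E 1 (-1) 0 = s • (E 1 (-1) 0 * E 1 a 1) := by
    intro a
    rw [hEmul, hEmul, smul_smul]
    have h1 : (a + -1 : ℂ) = -1 + a := by ring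
    have h2 : ((1 : ℂ) + 0) = 0 + 1 := by ring
    rw [h1, h2, ← Complex.exp_add]
    congr 1
    ring
  have step01 : ∀ (x : A) (a : ℂ), (∀ c d : ℂ, x * E 1 c d = E 1 c d * x) →
      x * E 1 a (-1) * E 1 1 0 = s • (E 1 1 0 * (x * E 1 a (-1))) := by
    intro x a hx
    rw [mul_assoc, key01 a, mul_smul_comm, ← mul_assoc, hx, mul_assoc]
  have step10 : ∀ (x : A) (a : ℂ), (∀ c d : ℂ, x * E 1 c d = E 1 c d * x) →
      x * E 1 a 1 * E 1 (-1) 0 = s • (E 1 (-1) 0 * (x * E 1 a 1)) := by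
    intro x a hx
    rw [mul_assoc, key10 a, mul_smul_comm, ← mul_assoc, hx, mul_assoc]
  -- entries of Ltil 1
  have e00 : Ltil 1 lam 0 0 = qi4 • E 1 0 1 := by simp [Ltil]
  have e01 : Ltil 1 lam 0 1 = (qi4 * (Δ * lam)) • E 1 (-2) (-1) := by
    simp [Ltil, smul_smul]
  have e10 : Ltil 1 lam 1 0 = (qi4 * (Δ * lam)) • E 1 2 1 := by
    simp [Ltil, smul_smul]
  have e11 : Ltil 1 lam 1 1 = qi4 • E 1 0 (-1) := by simp [Ltil]
  -- the commutation for the full monodromy entries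
  have hM01 : Mtil lam 0 1 * E 1 1 0 = s • (E 1 1 0 * Mtil lam 0 1) := by
    rw [hMtil, Matrix.mul_apply, Fin.sum_univ_two, e01, e11]
    rw [mul_smul_comm, mul_smul_comm, add_mul, smul_mul_assoc, smul_mul_assoc,
      step01 _ _ (hP 0 0), step01 _ _ (hP 0 1)]
    simp only [mul_add, smul_add, mul_smul_comm, smul_smul]
    module
  have hM10 : Mtil lam 1 0 * E 1 (-1) 0 = s • (E 1 (-1) 0 * Mtil lam 1 0) := by
    rw [hMtil, Matrix.mul_apply, Fin.sum_univ_two, e00, e10]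
    rw [mul_smul_comm, mul_smul_comm, add_mul, smul_mul_assoc, smul_mul_assoc,
      step10 _ _ (hP 1 0), step10 _ _ (hP 1 1)]
    simp only [mul_add, smul_add, mul_smul_comm, smul_smul]
    module
  -- squares of the dressing factors
  have hsq1 : E 1 1 0 * E 1 1 0 = E 1 2 0 := by
    rw [hEmul]
    norm_num
  have hsq2 : E 1 (-1) 0 * E 1 (-1) 0 = E 1 (-2) 0 := by
    rw [hEmul]
    norm_num
  -- compute the entries of M lam
  have hMent01 : M lam 0 1 = E 1 1 0 * Mtil lam 0 1 * E 1 1 0 := by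
    simp only [M, D1, D1inv, Matrix.mul_apply, Fin.sum_univ_two, Matrix.of_apply,
      Matrix.cons_val', Matrix.cons_val_zero, Matrix.cons_val_one,
      Matrix.head_cons, Matrix.head_fin_const, Matrix.empty_val',
      Matrix.cons_val_fin_one, zero_mul, mul_zero, add_zero, zero_add]
  have hMent10 : M lam 1 0 = E 1 (-1) 0 * Mtil lam 1 0 * E 1 (-1) 0 := by
    simp only [M, D1, D1inv, Matrix.mul_apply, Fin.sum_univ_two, Matrix.of_apply,
      Matrix.cons_val', Matrix.cons_val_zero, Matrix.cons_val_one,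
      Matrix.head_cons, Matrix.head_fin_const, Matrix.empty_val',
      Matrix.cons_val_fin_one, zero_mul, mul_zero, add_zero, zero_add]
  constructor
  · rw [hMent01, mul_assoc, hM01, mul_smul_comm, ← mul_assoc, hsq1]
  · rw [hMent10, mul_assoc, hM10, mul_smul_comm, ← mul_assoc, hsq2]
end
end

section
/- Right Lax factorization: with W^±_m = e^{i[±(x_{m+1}-x_m)-p_m]}, the right Lax operator L̄_m(λ) = [[(W^+_m)^{-1}, Δλ W^-_m],[Δλ (W^-_m)^{-1}, W^+_m]] factorizes as L̄_m(λ) = D_{m+1}^{-1} Ū_m(λ), where D_m = diag(e^{ix_m}, e^{-ix_m}) and Ū_m(λ) = [[e^{i(x_m+p_m)}, Δλ e^{i(x_m-p_m)}],[Δλ e^{-i(x_m-p_m)}, e^{-i(x_m+p_m)}]]; consequently M̄(λ) = L̄_N(λ^{-1})···L̄_1(λ^{-1}) satisfies D_1 M̄(λ) D_1^{-1} = L̃̄_N(λ^{-1})···L̃̄_1(λ^{-1}) with ultralocal operators L̃̄_m(λ) := Ū_m(λ) D_m^{-1}. -/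
/-!
Left multiplication by the diagonal `D_{m+1}⁻¹` scales rows, so `L̄_m = D_{m+1}⁻¹ Ū_m` is an entrywise
identity. Appending `D_1⁻¹ = D_{N+1}⁻¹` to `L̄_N ⋯ L̄_1` and regrouping by associativity shifts every
`D⁻¹` one slot to the right: `L̄_N ⋯ L̄_1 D_1⁻¹ = D_1⁻¹ (Ū_N D_N⁻¹) ⋯ (Ū_1 D_1⁻¹)`. Finally
`D_1 D_1⁻¹ = 1` because the Weyl phase of `e^{ix} e^{-ix}` vanishes.
-/

open Matrix Complex

noncomputable section

theorem List.prod_range_map_mul_mul_eq_mul_prod {M : Type*} [Monoid M] (g u : ℕ → M) (n : ℕ) :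
    ((List.range n).map fun k => g k * u k).prod * g n =
      g 0 * ((List.range n).map fun k => u k * g (k + 1)).prod := by
  induction n with
  | zero => simp
  | succ n ih =>
    rw [List.prod_range_succ, List.prod_range_succ, ← mul_assoc (g 0), ← ih]
    simp only [mul_assoc]

theorem ZMod.prod_map_range_sub_mul_mul_eq_mul_prod {M : Type*} [Monoid M] (N : ℕ)
    (d f : ZMod N → M) :
    ((List.range N).map fun k => d ((N - k : ℕ) + 1) * f (N - k : ℕ)).prod * d 1 =
      d 1 * ((List.range N).map fun k => f (N - k : ℕ) * d (N - k : ℕ)).prod := by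
  have hsite : ∀ k ∈ List.range N, ((N - k : ℕ) : ZMod N) = -k := fun k hk => by
    rw [Nat.cast_sub (List.mem_range.1 hk).le, ZMod.natCast_self, zero_sub]
  have key := List.prod_range_map_mul_mul_eq_mul_prod (fun k : ℕ => d (1 - k))
    (fun k => f (N - k : ℕ)) N
  simp only [ZMod.natCast_self, Nat.cast_zero, Nat.cast_add, Nat.cast_one, sub_zero] at key
  convert key using 3
  · refine List.map_congr_left fun k hk => ?_
    rw [hsite k hk, neg_add_eq_sub]
  · refine List.map_congr_left fun k hk => ?_
    rw [hsite k hk, sub_add_eq_sub_sub, sub_sub_cancel_left]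

theorem Matrix.fin_two_diag_mul_eq_one {R : Type*} [NonAssocSemiring R] {a b a' b' : R}
    (ha : a * a' = 1) (hb : b * b' = 1) : !![a, 0; 0, b] * !![a', 0; 0, b'] = 1 := by
  simp [Matrix.one_fin_two, ha, hb]

/-- `E m a b` stands for `e^{i(a·x_m + b·p_m)}`, with sites indexed by `ZMod N`. -/
theorem right_lax_factorization_general {A : Type*} [Ring A] [Algebra ℂ A]
    (N : ℕ) (β : ℝ) (E : ZMod N → ℂ → ℂ → A)
    (hE0 : ∀ m, E m 0 0 = 1)
    (hEmul : ∀ m a b c d, E m a b * E m c d =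
      Complex.exp (-(a * d - b * c) * (Real.pi * β ^ 2) * Complex.I / 4) •
        E m (a + c) (b + d))
    (Δ : ℂ) :
    -- W^±_m = e^{i[±(x_{m+1}-x_m)-p_m]} and their inverses
    let Wp : ZMod N → A := fun m => E (m + 1) 1 0 * E m (-1) (-1)
    let Wm : ZMod N → A := fun m => E (m + 1) (-1) 0 * E m 1 (-1)
    let WpInv : ZMod N → A := fun m => E (m + 1) (-1) 0 * E m 1 1
    let WmInv : ZMod N → A := fun m => E (m + 1) 1 0 * E m (-1) 1
    -- L̄_m(λ) = [[(W^+_m)⁻¹, Δλ W^-_m],[Δλ (W^-_m)⁻¹, W^+_m]]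
    let Lbar : ZMod N → ℂ → M2 A := fun m lam =>
      !![WpInv m, (Δ * lam) • Wm m; (Δ * lam) • WmInv m, Wp m]
    let D : ZMod N → M2 A := fun m => !![E m 1 0, 0; 0, E m (-1) 0]
    let Dinv : ZMod N → M2 A := fun m => !![E m (-1) 0, 0; 0, E m 1 0]
    let Ubar : ZMod N → ℂ → M2 A := fun m lam =>
      !![E m 1 1, (Δ * lam) • E m 1 (-1);
         (Δ * lam) • E m (-1) 1, E m (-1) (-1)]
    -- M̄(λ) = L̄_N(λ⁻¹) ⋯ L̄_1(λ⁻¹)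
    let Mbar : ℂ → M2 A := fun lam =>
      ((List.range N).map (fun k => Lbar ((N - k : ℕ) : ZMod N) lam⁻¹)).prod
    (∀ (m : ZMod N) (lam : ℂ), Lbar m lam = Dinv (m + 1) * Ubar m lam) ∧
    (∀ lam : ℂ, D 1 * Mbar lam * Dinv 1 =
      ((List.range N).map
        (fun k => Ubar ((N - k : ℕ) : ZMod N) lam⁻¹ *
                  Dinv ((N - k : ℕ) : ZMod N))).prod) := by
  intro Wp Wm WpInv WmInv Lbar D Dinv Ubar Mbar
  have hfactor : ∀ m lam, Lbar m lam = Dinv (m + 1) * Ubar m lam := by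
    intro m lam
    simp [Lbar, Dinv, Ubar, Wp, Wm, WpInv, WmInv]
  have hDDinv : D 1 * Dinv 1 = 1 := by
    apply Matrix.fin_two_diag_mul_eq_one <;> simp [hEmul, hE0]
  refine ⟨hfactor, fun lam => ?_⟩
  simp only [Mbar, hfactor]
  rw [mul_assoc, ZMod.prod_map_range_sub_mul_mul_eq_mul_prod N Dinv (Ubar · lam⁻¹), ← mul_assoc,
    hDDinv, one_mul]

/-- Right Lax factorization `L̄_m(λ) = D_{m+1}⁻¹ Ū_m(λ)` and the resulting
telescoping identity `D₁ M̄(λ) D₁⁻¹ = L̃̄_N(λ⁻¹) ⋯ L̃̄_1(λ⁻¹)` with the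
ultralocal operators `L̃̄_m(λ) = Ū_m(λ) D_m⁻¹`.
Here `E m a b` stands for `e^{i(a·x_m + b·p_m)}` with periodic sites. -/
theorem right_lax_factorization {A : Type*} [Ring A] [Algebra ℂ A]
    (N : ℕ) (β : ℝ) (E : ZMod N → ℂ → ℂ → A)
    (hE0 : ∀ m, E m 0 0 = 1)
    (hEmul : ∀ m a b c d, E m a b * E m c d =
      Complex.exp (-(a * d - b * c) * (Real.pi * β ^ 2) * Complex.I / 4) •
        E m (a + c) (b + d))
    (hEcomm : ∀ m n a b c d, m ≠ n → E m a b * E n c d = E n c d * E m a b)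
    (Δ : ℂ) :
    -- W^±_m = e^{i[±(x_{m+1}-x_m)-p_m]} and their inverses
    let Wp : ZMod N → A := fun m => E (m + 1) 1 0 * E m (-1) (-1)
    let Wm : ZMod N → A := fun m => E (m + 1) (-1) 0 * E m 1 (-1)
    let WpInv : ZMod N → A := fun m => E (m + 1) (-1) 0 * E m 1 1
    let WmInv : ZMod N → A := fun m => E (m + 1) 1 0 * E m (-1) 1
    -- L̄_m(λ) = [[(W^+_m)⁻¹, Δλ W^-_m],[Δλ (W^-_m)⁻¹, W^+_m]]
    let Lbar : ZMod N → ℂ → M2 A := fun m lam =>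
      !![WpInv m, (Δ * lam) • Wm m; (Δ * lam) • WmInv m, Wp m]
    let D : ZMod N → M2 A := fun m => !![E m 1 0, 0; 0, E m (-1) 0]
    let Dinv : ZMod N → M2 A := fun m => !![E m (-1) 0, 0; 0, E m 1 0]
    let Ubar : ZMod N → ℂ → M2 A := fun m lam =>
      !![E m 1 1, (Δ * lam) • E m 1 (-1);
         (Δ * lam) • E m (-1) 1, E m (-1) (-1)]
    -- M̄(λ) = L̄_N(λ⁻¹) ⋯ L̄_1(λ⁻¹)
    let Mbar : ℂ → M2 A := fun lam =>
      ((List.range N).map (fun k => Lbar ((N - k : ℕ) : ZMod N) lam⁻¹)).prod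
    (∀ (m : ZMod N) (lam : ℂ), Lbar m lam = Dinv (m + 1) * Ubar m lam) ∧
    (∀ lam : ℂ, D 1 * Mbar lam * Dinv 1 =
      ((List.range N).map
        (fun k => Ubar ((N - k : ℕ) : ZMod N) lam⁻¹ *
                  Dinv ((N - k : ℕ) : ZMod N))).prod) :=
  right_lax_factorization_general N β E hE0 hEmul Δ
end
end

section
/- The primed Lax operators L̃'_m(λ) = U_m(λ) D_m^{-1} = q^{1/4}[[e^{-i(2x_m - p_m)}, Δλ e^{-ip_m}],[Δλ e^{ip_m}, e^{i(2x_m - p_m)}]] and L̃̄'_m(λ) = Ū_m(λ) D_m = q^{-1/4}[[e^{i(2x_m+p_m)}, Δλ e^{-ip_m}],[Δλ e^{ip_m}, e^{-i(2x_m+p_m)}]] each satisfy the Yang–Baxter relation with the trigonometric R-matrix: R_{ab}(λ/λ') L'_a(λ) L'_b(λ') = L'_b(λ') L'_a(λ) R_{ab}(λ/λ') (and its analogue at inverted spectral parameter for L̃̄'). -/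
open Matrix Complex

set_option maxHeartbeats 4000000
noncomputable section

/-- The primed Lax operators `L̃'_m(λ) = U_m(λ) D_m⁻¹` and `L̃̄'_m(λ) = Ū_m(λ) D_m`
have the explicit ultralocal forms
`L̃' = q^{1/4}[[e^{-i(2x-p)}, Δλ e^{-ip}],[Δλ e^{ip}, e^{i(2x-p)}]]`,
`L̃̄' = q^{-1/4}[[e^{i(2x+p)}, Δλ e^{-ip}],[Δλ e^{ip}, e^{-i(2x+p)}]]`,
and each satisfies the Yang–Baxter relation with the trigonometric R-matrix
(`L̃'` directly, `L̃̄'` at inverted spectral parameter).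
Here `E a b = e^{i(ax+bp)}` for a Heisenberg pair `[x,p] = iπβ²/2`, `q = e^{-iπβ²}`. -/
theorem primed_lax_yang_baxter {A : Type*} [Ring A] [Algebra ℂ A]
    (β : ℝ) (E : ℂ → ℂ → A)
    (hE0 : E 0 0 = 1)
    (hEmul : ∀ a b c d, E a b * E c d =
      Complex.exp (-(a * d - b * c) * (Real.pi * β ^ 2) * Complex.I / 4) •
        E (a + c) (b + d))
    (Δ : ℂ) :
    let q : ℂ := Complex.exp (-(Real.pi * β ^ 2) * Complex.I)
    let q4 : ℂ := Complex.exp (-(Real.pi * β ^ 2) * Complex.I / 4)   -- q^{1/4}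
    let qi4 : ℂ := Complex.exp ((Real.pi * β ^ 2) * Complex.I / 4)   -- q^{-1/4}
    let U : ℂ → M2 A := fun lam =>
      !![E (-1) 1, (Δ * lam) • E (-1) (-1); (Δ * lam) • E 1 1, E 1 (-1)]
    let Ubar : ℂ → M2 A := fun lam =>
      !![E 1 1, (Δ * lam) • E 1 (-1); (Δ * lam) • E (-1) 1, E (-1) (-1)]
    let D : M2 A := !![E 1 0, 0; 0, E (-1) 0]
    let Dinv : M2 A := !![E (-1) 0, 0; 0, E 1 0]
    let Lp : ℂ → M2 A := fun lam => U lam * Dinv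
    let Lbp : ℂ → M2 A := fun lam => Ubar lam * D
    (∀ lam : ℂ, Lp lam =
      q4 • !![E (-2) 1, (Δ * lam) • E 0 (-1); (Δ * lam) • E 0 1, E 2 (-1)]) ∧
    (∀ lam : ℂ, Lbp lam =
      qi4 • !![E 2 1, (Δ * lam) • E 0 (-1); (Δ * lam) • E 0 1, E (-2) (-1)]) ∧
    (∀ lam lam' : ℂ, lam ≠ 0 → lam' ≠ 0 →
      q⁻¹ * (lam / lam')⁻¹ - q * (lam / lam') ≠ 0 →
      RA A q (lam / lam') * embA (Lp lam) * embB (Lp lam')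
        = embB (Lp lam') * embA (Lp lam) * RA A q (lam / lam')) ∧
    (∀ lam lam' : ℂ, lam ≠ 0 → lam' ≠ 0 →
      q⁻¹ * (lam / lam')⁻¹ - q * (lam / lam') ≠ 0 →
      RA A q (lam / lam') * embA (Lbp lam⁻¹) * embB (Lbp lam'⁻¹)
        = embB (Lbp lam'⁻¹) * embA (Lbp lam⁻¹) * RA A q (lam / lam')) := by

  intro q q4 qi4 U Ubar D Dinv Lp Lbp
  set u : ℂ := Complex.exp ((Real.pi * β ^ 2) * Complex.I / 4) with hudef
  have hu0 : u ≠ 0 := Complex.exp_ne_zero _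
  have key : ∀ (k : ℤ) (a b c d s t : ℂ), a + c = s → b + d = t → -(a*d - b*c) = (k:ℂ) →
      E a b * E c d = (u ^ k) • E s t := by
    intro k a b c d s t h1 h2 h3
    rw [hEmul, h1, h2]
    congr 1
    rw [show -(a*d-b*c) * (↑Real.pi*(β:ℂ)^2) * Complex.I / 4
          = (k:ℂ) * ((Real.pi * β ^ 2 : ℂ)*Complex.I/4) by rw [h3]; ring]
    exact Complex.exp_int_mul _ k
  have key2 : ∀ (a b c d s t : ℂ), a + c = s → b + d = t → -(a*d - b*c) = 2 →
      E a b * E c d = (u^2) • E s t := by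
    intro a b c d s t h1 h2 h3
    have := key 2 a b c d s t h1 h2 (by push_cast; exact h3)
    rwa [show (2:ℤ) = ((2:ℕ):ℤ) from rfl, zpow_natCast] at this
  have keym2 : ∀ (a b c d s t : ℂ), a + c = s → b + d = t → -(a*d - b*c) = -2 →
      E a b * E c d = ((u^2)⁻¹) • E s t := by
    intro a b c d s t h1 h2 h3
    have := key (-2) a b c d s t h1 h2 (by push_cast; exact h3)
    rwa [show (-2:ℤ) = -((2:ℕ):ℤ) from rfl, _root_.zpow_neg, zpow_natCast] at this
  have key0 : ∀ (a b c d s t : ℂ), a + c = s → b + d = t → -(a*d - b*c) = 0 →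
      E a b * E c d = E s t := by
    intro a b c d s t h1 h2 h3
    have := key 0 a b c d s t h1 h2 (by push_cast; exact h3)
    rwa [zpow_zero, one_smul] at this
  have hq : q = (u^4)⁻¹ := by
    show Complex.exp (-(Real.pi * β ^ 2) * Complex.I) = (u^4)⁻¹
    rw [show (-(Real.pi * β ^ 2) * Complex.I : ℂ)
          = ((-4:ℤ):ℂ) * ((Real.pi * β ^ 2 : ℂ)*Complex.I/4) by push_cast; ring,
        Complex.exp_int_mul, ← hudef]
    rw [show (-4:ℤ) = -(4:ℕ) by norm_num, _root_.zpow_neg, zpow_natCast]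
  have hq4 : q4 = u⁻¹ := by
    show Complex.exp (-(Real.pi * β ^ 2) * Complex.I / 4) = u⁻¹
    rw [show (-(Real.pi * β ^ 2) * Complex.I / 4 : ℂ)
          = -((Real.pi * β ^ 2 : ℂ)*Complex.I/4) by ring, Complex.exp_neg, ← hudef]
  have hqi4 : qi4 = u := rfl
  have part1 : ∀ lam : ℂ, Lp lam =
      q4 • !![E (-2) 1, (Δ * lam) • E 0 (-1); (Δ * lam) • E 0 1, E 2 (-1)] := by
    intro lam
    have e1 : E (-1) 1 * E (-1) 0 = u⁻¹ • E (-2) 1 := by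
      have := key (-1) (-1) 1 (-1) 0 (-2) 1 (by norm_num) (by norm_num) (by norm_num)
      simpa using this
    have e2 : E (-1) (-1) * E 1 0 = u⁻¹ • E 0 (-1) := by
      have := key (-1) (-1) (-1) 1 0 0 (-1) (by norm_num) (by norm_num) (by norm_num)
      simpa using this
    have e3 : E 1 1 * E (-1) 0 = u⁻¹ • E 0 1 := by
      have := key (-1) 1 1 (-1) 0 0 1 (by norm_num) (by norm_num) (by norm_num)
      simpa using this
    have e4 : E 1 (-1) * E 1 0 = u⁻¹ • E 2 (-1) := by
      have := key (-1) 1 (-1) 1 0 2 (-1) (by norm_num) (by norm_num) (by norm_num)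
      simpa using this
    show U lam * Dinv = _
    ext i j
    fin_cases i <;> fin_cases j <;>
      simp [U, Dinv, Matrix.mul_apply, Fin.sum_univ_two, e1, e2, e3, e4, hq4,
        smul_mul_assoc, smul_smul, mul_comm]
  have part2 : ∀ lam : ℂ, Lbp lam =
      qi4 • !![E 2 1, (Δ * lam) • E 0 (-1); (Δ * lam) • E 0 1, E (-2) (-1)] := by
    intro lam
    have e1 : E 1 1 * E 1 0 = u • E 2 1 := by
      have := key 1 1 1 1 0 2 1 (by norm_num) (by norm_num) (by norm_num)
      simpa using this
    have e2 : E 1 (-1) * E (-1) 0 = u • E 0 (-1) := by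
      have := key 1 1 (-1) (-1) 0 0 (-1) (by norm_num) (by norm_num) (by norm_num)
      simpa using this
    have e3 : E (-1) 1 * E 1 0 = u • E 0 1 := by
      have := key 1 (-1) 1 1 0 0 1 (by norm_num) (by norm_num) (by norm_num)
      simpa using this
    have e4 : E (-1) (-1) * E (-1) 0 = u • E (-2) (-1) := by
      have := key 1 (-1) (-1) (-1) 0 (-2) (-1) (by norm_num) (by norm_num) (by norm_num)
      simpa using this
    show Ubar lam * D = _
    ext i j
    fin_cases i <;> fin_cases j <;>
      simp [Ubar, D, Matrix.mul_apply, Fin.sum_univ_two, e1, e2, e3, e4, hqi4,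
        smul_mul_assoc, smul_smul, mul_comm]
  have pAA : E (-2) 1 * E (-2) 1 = E (-4) 2 :=
    key0 _ _ _ _ _ _ (by norm_num) (by norm_num) (by norm_num)
  have pAB : E (-2) 1 * E 0 (-1) = ((u^2)⁻¹) • E (-2) 0 :=
    keym2 _ _ _ _ _ _ (by norm_num) (by norm_num) (by norm_num)
  have pAC : E (-2) 1 * E 0 1 = (u^2) • E (-2) 2 :=
    key2 _ _ _ _ _ _ (by norm_num) (by norm_num) (by norm_num)
  have pAD : E (-2) 1 * E 2 (-1) = E 0 0 :=
    key0 _ _ _ _ _ _ (by norm_num) (by norm_num) (by norm_num)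
  have pBA : E 0 (-1) * E (-2) 1 = (u^2) • E (-2) 0 :=
    key2 _ _ _ _ _ _ (by norm_num) (by norm_num) (by norm_num)
  have pBB : E 0 (-1) * E 0 (-1) = E 0 (-2) :=
    key0 _ _ _ _ _ _ (by norm_num) (by norm_num) (by norm_num)
  have pBC : E 0 (-1) * E 0 1 = E 0 0 :=
    key0 _ _ _ _ _ _ (by norm_num) (by norm_num) (by norm_num)
  have pBD : E 0 (-1) * E 2 (-1) = ((u^2)⁻¹) • E 2 (-2) :=
    keym2 _ _ _ _ _ _ (by norm_num) (by norm_num) (by norm_num)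
  have pCA : E 0 1 * E (-2) 1 = ((u^2)⁻¹) • E (-2) 2 :=
    keym2 _ _ _ _ _ _ (by norm_num) (by norm_num) (by norm_num)
  have pCB : E 0 1 * E 0 (-1) = E 0 0 :=
    key0 _ _ _ _ _ _ (by norm_num) (by norm_num) (by norm_num)
  have pCC : E 0 1 * E 0 1 = E 0 2 :=
    key0 _ _ _ _ _ _ (by norm_num) (by norm_num) (by norm_num)
  have pCD : E 0 1 * E 2 (-1) = (u^2) • E 2 0 :=
    key2 _ _ _ _ _ _ (by norm_num) (by norm_num) (by norm_num)
  have pDA : E 2 (-1) * E (-2) 1 = E 0 0 :=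
    key0 _ _ _ _ _ _ (by norm_num) (by norm_num) (by norm_num)
  have pDB : E 2 (-1) * E 0 (-1) = (u^2) • E 2 (-2) :=
    key2 _ _ _ _ _ _ (by norm_num) (by norm_num) (by norm_num)
  have pDC : E 2 (-1) * E 0 1 = ((u^2)⁻¹) • E 2 0 :=
    keym2 _ _ _ _ _ _ (by norm_num) (by norm_num) (by norm_num)
  have pDD : E 2 (-1) * E 2 (-1) = E 4 (-2) :=
    key0 _ _ _ _ _ _ (by norm_num) (by norm_num) (by norm_num)
  have pWW : E 2 1 * E 2 1 = E 4 2 :=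
    key0 _ _ _ _ _ _ (by norm_num) (by norm_num) (by norm_num)
  have pWB : E 2 1 * E 0 (-1) = (u^2) • E 2 0 :=
    key2 _ _ _ _ _ _ (by norm_num) (by norm_num) (by norm_num)
  have pWC : E 2 1 * E 0 1 = ((u^2)⁻¹) • E 2 2 :=
    keym2 _ _ _ _ _ _ (by norm_num) (by norm_num) (by norm_num)
  have pWZ : E 2 1 * E (-2) (-1) = E 0 0 :=
    key0 _ _ _ _ _ _ (by norm_num) (by norm_num) (by norm_num)
  have pBW : E 0 (-1) * E 2 1 = ((u^2)⁻¹) • E 2 0 :=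
    keym2 _ _ _ _ _ _ (by norm_num) (by norm_num) (by norm_num)
  have pBZ : E 0 (-1) * E (-2) (-1) = (u^2) • E (-2) (-2) :=
    key2 _ _ _ _ _ _ (by norm_num) (by norm_num) (by norm_num)
  have pCW : E 0 1 * E 2 1 = (u^2) • E 2 2 :=
    key2 _ _ _ _ _ _ (by norm_num) (by norm_num) (by norm_num)
  have pCZ : E 0 1 * E (-2) (-1) = ((u^2)⁻¹) • E (-2) 0 :=
    keym2 _ _ _ _ _ _ (by norm_num) (by norm_num) (by norm_num)
  have pZW : E (-2) (-1) * E 2 1 = E 0 0 :=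
    key0 _ _ _ _ _ _ (by norm_num) (by norm_num) (by norm_num)
  have pZB : E (-2) (-1) * E 0 (-1) = ((u^2)⁻¹) • E (-2) (-2) :=
    keym2 _ _ _ _ _ _ (by norm_num) (by norm_num) (by norm_num)
  have pZC : E (-2) (-1) * E 0 1 = (u^2) • E (-2) 0 :=
    key2 _ _ _ _ _ _ (by norm_num) (by norm_num) (by norm_num)
  have pZZ : E (-2) (-1) * E (-2) (-1) = E (-4) (-2) :=
    key0 _ _ _ _ _ _ (by norm_num) (by norm_num) (by norm_num)
  refine ⟨part1, part2, ?_, ?_⟩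
  · intro lam lam' hl hl' hden
    rw [hq] at hden
    rw [part1 lam, part1 lam', hq4, hq]
    rw [inv_inv] at hden
    have hden2 : u^8 * lam'^2 - lam^2 ≠ 0 := by
      have h : (u ^ 4 * (lam / lam')⁻¹ - (u ^ 4)⁻¹ * (lam / lam')) * (u^4 * lam * lam')
          = u^8 * lam'^2 - lam^2 := by
        field_simp
      rw [← h]
      exact mul_ne_zero hden (mul_ne_zero (mul_ne_zero (pow_ne_zero 4 hu0) hl) hl')
    have hden3 : ∀ x y : ℂ, x ≠ 0 → y ≠ 0 →
        (-(y ^ 2 * u ^ 14 * x ^ 2 * 2) + y ^ 4 * u ^ 22 + u ^ 6 * x ^ 4) ≠ 0 → True := fun _ _ _ _ _ => trivial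
    have h3 : (-(lam' ^ 2 * u ^ 14 * lam ^ 2 * 2) + lam' ^ 4 * u ^ 22 + u ^ 6 * lam ^ 4) ≠ 0 := by
      intro h
      apply hden2
      have h6 : (u:ℂ)^6 ≠ 0 := pow_ne_zero _ hu0
      have hz : u^6 * ((u^8*lam'^2 - lam^2)*(u^8*lam'^2 - lam^2)) = 0 := by rw [← h]; ring
      rcases mul_eq_zero.mp hz with h'|h'
      · exact absurd h' h6
      · rcases mul_eq_zero.mp h' with h''|h'' <;> exact h''
    have h4 : (-(lam ^ 2 * u ^ 14 * lam' ^ 2 * 2) + lam ^ 4 * u ^ 6 + u ^ 22 * lam' ^ 4) ≠ 0 := by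
      intro h
      apply hden2
      have h6 : (u:ℂ)^6 ≠ 0 := pow_ne_zero _ hu0
      have hz : u^6 * ((u^8*lam'^2 - lam^2)*(u^8*lam'^2 - lam^2)) = 0 := by rw [← h]; ring
      rcases mul_eq_zero.mp hz with h'|h'
      · exact absurd h' h6
      · rcases mul_eq_zero.mp h' with h''|h'' <;> exact h''
    have hf : ((lam/lam')⁻¹ - lam/lam') / (u^4*(lam/lam')⁻¹ - (u^4)⁻¹*(lam/lam'))
        = (u^4*lam'^2 - u^4*lam^2) / (u^8*lam'^2 - lam^2) := by
      rw [div_eq_div_iff hden hden2]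
      field_simp
    have hh : (u^4 - (u^4)⁻¹) / (u^4*(lam/lam')⁻¹ - (u^4)⁻¹*(lam/lam'))
        = (u^8*lam*lam' - lam*lam') / (u^8*lam'^2 - lam^2) := by
      rw [div_eq_div_iff hden hden2]
      field_simp
    rw [← Matrix.ext_iff]
    simp only [Prod.forall, Fin.forall_fin_two]
    repeat' apply And.intro
    all_goals simp only [Fin.reduceEq, and_true, true_and, and_false, false_and, and_self,
        inv_inv, hf, hh, RA, Rmat, embA, embB, Matrix.of_apply, Matrix.mul_apply, Fintype.sum_prod_type,
        Fin.sum_univ_two, Matrix.smul_apply, Matrix.map_apply, Matrix.cons_val',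
        Matrix.cons_val_zero, Matrix.cons_val_one, Matrix.head_cons, Matrix.head_fin_const,
        Matrix.empty_val', Matrix.cons_val_fin_one, Prod.mk.injEq, smul_mul_assoc,
        mul_smul_comm, smul_smul, ← Algebra.commutes, ← Algebra.smul_def,
        pAA, pAB, pAC, pAD, pBA, pBB, pBC, pBD, pCA, pCB, pCC, pCD, pDA, pDB, pDC, pDD, pWW, pWB, pWC, pWZ, pBW, pBZ, pCW, pCZ, pZW, pZB, pZC, pZZ, hE0, map_zero, _root_.map_one, zero_mul, mul_zero, one_mul, mul_one,
        smul_zero, zero_smul, one_smul, smul_add, add_zero, zero_add,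
        if_true, if_false, reduceIte, Fin.isValue]
    all_goals match_scalars
    all_goals (field_simp [hu0, hl, hl', hden2, h3, h4]; try ring; try (field_simp [h3, h4]; ring))
  · intro lam lam' hl hl' hden
    rw [hq] at hden
    rw [part2 lam⁻¹, part2 lam'⁻¹, hqi4, hq]
    rw [inv_inv] at hden
    have hden2 : u^8 * lam'^2 - lam^2 ≠ 0 := by
      have h : (u ^ 4 * (lam / lam')⁻¹ - (u ^ 4)⁻¹ * (lam / lam')) * (u^4 * lam * lam')
          = u^8 * lam'^2 - lam^2 := by
        field_simp
      rw [← h]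
      exact mul_ne_zero hden (mul_ne_zero (mul_ne_zero (pow_ne_zero 4 hu0) hl) hl')
    have hden3 : ∀ x y : ℂ, x ≠ 0 → y ≠ 0 →
        (-(y ^ 2 * u ^ 14 * x ^ 2 * 2) + y ^ 4 * u ^ 22 + u ^ 6 * x ^ 4) ≠ 0 → True := fun _ _ _ _ _ => trivial
    have h3 : (-(lam' ^ 2 * u ^ 14 * lam ^ 2 * 2) + lam' ^ 4 * u ^ 22 + u ^ 6 * lam ^ 4) ≠ 0 := by
      intro h
      apply hden2
      have h6 : (u:ℂ)^6 ≠ 0 := pow_ne_zero _ hu0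
      have hz : u^6 * ((u^8*lam'^2 - lam^2)*(u^8*lam'^2 - lam^2)) = 0 := by rw [← h]; ring
      rcases mul_eq_zero.mp hz with h'|h'
      · exact absurd h' h6
      · rcases mul_eq_zero.mp h' with h''|h'' <;> exact h''
    have h4 : (-(lam ^ 2 * u ^ 14 * lam' ^ 2 * 2) + lam ^ 4 * u ^ 6 + u ^ 22 * lam' ^ 4) ≠ 0 := by
      intro h
      apply hden2
      have h6 : (u:ℂ)^6 ≠ 0 := pow_ne_zero _ hu0
      have hz : u^6 * ((u^8*lam'^2 - lam^2)*(u^8*lam'^2 - lam^2)) = 0 := by rw [← h]; ring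
      rcases mul_eq_zero.mp hz with h'|h'
      · exact absurd h' h6
      · rcases mul_eq_zero.mp h' with h''|h'' <;> exact h''
    have hf : ((lam/lam')⁻¹ - lam/lam') / (u^4*(lam/lam')⁻¹ - (u^4)⁻¹*(lam/lam'))
        = (u^4*lam'^2 - u^4*lam^2) / (u^8*lam'^2 - lam^2) := by
      rw [div_eq_div_iff hden hden2]
      field_simp
    have hh : (u^4 - (u^4)⁻¹) / (u^4*(lam/lam')⁻¹ - (u^4)⁻¹*(lam/lam'))
        = (u^8*lam*lam' - lam*lam') / (u^8*lam'^2 - lam^2) := by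
      rw [div_eq_div_iff hden hden2]
      field_simp
    rw [← Matrix.ext_iff]
    simp only [Prod.forall, Fin.forall_fin_two]
    repeat' apply And.intro
    all_goals simp only [Fin.reduceEq, and_true, true_and, and_false, false_and, and_self,
        inv_inv, hf, hh, RA, Rmat, embA, embB, Matrix.of_apply, Matrix.mul_apply, Fintype.sum_prod_type,
        Fin.sum_univ_two, Matrix.smul_apply, Matrix.map_apply, Matrix.cons_val',
        Matrix.cons_val_zero, Matrix.cons_val_one, Matrix.head_cons, Matrix.head_fin_const,
        Matrix.empty_val', Matrix.cons_val_fin_one, Prod.mk.injEq, smul_mul_assoc,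
        mul_smul_comm, smul_smul, ← Algebra.commutes, ← Algebra.smul_def,
        pAA, pAB, pAC, pAD, pBA, pBB, pBC, pBD, pCA, pCB, pCC, pCD, pDA, pDB, pDC, pDD, pWW, pWB, pWC, pWZ, pBW, pBZ, pCW, pCZ, pZW, pZB, pZC, pZZ, hE0, map_zero, _root_.map_one, zero_mul, mul_zero, one_mul, mul_one,
        smul_zero, zero_smul, one_smul, smul_add, add_zero, zero_add,
        if_true, if_false, reduceIte, Fin.isValue]
    all_goals match_scalars
    all_goals (field_simp [hu0, hl, hl', hden2, h3, h4]; try ring; try (field_simp [h3, h4]; ring))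
end
end

section
/- The trigonometric R-matrix satisfies the (parameter-dependent) Yang–Baxter equation on C²⊗C²⊗C²: R_{12}(λ/λ') R_{13}(λ/λ'') R_{23}(λ'/λ'') = R_{23}(λ'/λ'') R_{13}(λ/λ'') R_{12}(λ/λ'), for all nonzero λ, λ', λ'' such that all denominators are nonzero. -/
open Matrix Complex

noncomputable section

/-- `R_{12}`, `R_{13}`, `R_{23}` acting on ℂ²⊗ℂ²⊗ℂ². -/
def R12 (q ξ : ℂ) : Matrix (Fin 2 × Fin 2 × Fin 2) (Fin 2 × Fin 2 × Fin 2) ℂ :=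
  fun p r => if p.2.2 = r.2.2 then Rmat q ξ (p.1, p.2.1) (r.1, r.2.1) else 0

def R23 (q ξ : ℂ) : Matrix (Fin 2 × Fin 2 × Fin 2) (Fin 2 × Fin 2 × Fin 2) ℂ :=
  fun p r => if p.1 = r.1 then Rmat q ξ (p.2.1, p.2.2) (r.2.1, r.2.2) else 0

def R13 (q ξ : ℂ) : Matrix (Fin 2 × Fin 2 × Fin 2) (Fin 2 × Fin 2 × Fin 2) ℂ :=
  fun p r => if p.2.1 = r.2.1 then Rmat q ξ (p.1, p.2.2) (r.1, r.2.2) else 0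

/-- polynomial (denominator-cleared) version of `Rmat`. -/
def Smat (q x : ℂ) : M4 ℂ :=
  fun p r =>
    if p = r then (if p.1 = p.2 then 1 - q^2*x^2 else q*(1 - x^2))
    else if p.1 = r.2 ∧ p.2 = r.1 then x*(1 - q^2)
    else 0

def S12 (q x : ℂ) : Matrix (Fin 2 × Fin 2 × Fin 2) (Fin 2 × Fin 2 × Fin 2) ℂ :=
  fun p r => if p.2.2 = r.2.2 then Smat q x (p.1, p.2.1) (r.1, r.2.1) else 0
def S23 (q x : ℂ) : Matrix (Fin 2 × Fin 2 × Fin 2) (Fin 2 × Fin 2 × Fin 2) ℂ :=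
  fun p r => if p.1 = r.1 then Smat q x (p.2.1, p.2.2) (r.2.1, r.2.2) else 0
def S13 (q x : ℂ) : Matrix (Fin 2 × Fin 2 × Fin 2) (Fin 2 × Fin 2 × Fin 2) ℂ :=
  fun p r => if p.2.1 = r.2.1 then Smat q x (p.1, p.2.2) (r.1, r.2.2) else 0

lemma den_ne (q x : ℂ) (hq : q ≠ 0) (hx : x ≠ 0) (hd : q⁻¹ * x⁻¹ - q * x ≠ 0) :
    1 - q^2*x^2 ≠ 0 := by
  intro h
  apply hd
  have : q⁻¹ * x⁻¹ - q * x = (1 - q^2*x^2) / (q*x) := by field_simp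
  rw [this, h, zero_div]

lemma Rmat_eq (q x : ℂ) (hq : q ≠ 0) (hx : x ≠ 0) (hd : q⁻¹ * x⁻¹ - q * x ≠ 0) :
    Rmat q x = (1 - q^2*x^2)⁻¹ • Smat q x := by
  have hA := den_ne q x hq hx hd
  funext p r
  simp only [Rmat, Smat, Matrix.smul_apply, smul_eq_mul, mul_ite, mul_zero, mul_one]
  split_ifs
  · exact (inv_mul_cancel₀ hA).symm
  · rw [div_eq_iff hd]
    rw [inv_mul_eq_div, div_mul_eq_mul_div, eq_div_iff hA]
    field_simp
  · rw [div_eq_iff hd]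
    field_simp
  · rfl

lemma R12_eq (q x : ℂ) (hq : q ≠ 0) (hx : x ≠ 0) (hd : q⁻¹ * x⁻¹ - q * x ≠ 0) :
    R12 q x = (1 - q^2*x^2)⁻¹ • S12 q x := by
  funext p r
  simp only [R12, S12, Rmat_eq q x hq hx hd, Matrix.smul_apply, smul_eq_mul]
  split_ifs <;> simp

lemma R23_eq (q x : ℂ) (hq : q ≠ 0) (hx : x ≠ 0) (hd : q⁻¹ * x⁻¹ - q * x ≠ 0) :
    R23 q x = (1 - q^2*x^2)⁻¹ • S23 q x := by
  funext p r
  simp only [R23, S23, Rmat_eq q x hq hx hd, Matrix.smul_apply, smul_eq_mul]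
  split_ifs <;> simp

lemma R13_eq (q x : ℂ) (hq : q ≠ 0) (hx : x ≠ 0) (hd : q⁻¹ * x⁻¹ - q * x ≠ 0) :
    R13 q x = (1 - q^2*x^2)⁻¹ • S13 q x := by
  funext p r
  simp only [R13, S13, Rmat_eq q x hq hx hd, Matrix.smul_apply, smul_eq_mul]
  split_ifs <;> simp

set_option maxHeartbeats 4000000 in
lemma s_ybe (q x z : ℂ) :
    S12 q x * S13 q (x*z) * S23 q z = S23 q z * S13 q (x*z) * S12 q x := by
  ext ⟨a, b, c⟩ ⟨d, e, f⟩
  fin_cases a <;> fin_cases b <;> fin_cases c <;> fin_cases d <;> fin_cases e <;> fin_cases f <;>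
  · simp only [Matrix.mul_apply, S12, S13, S23, Smat, Fintype.sum_prod_type,
      Fin.sum_univ_two, Prod.mk.injEq]
    norm_num
    try ring

lemma ybe_aux (q x z : ℂ) (hq : q ≠ 0) (hx : x ≠ 0) (hz : z ≠ 0)
    (dx : q⁻¹ * x⁻¹ - q * x ≠ 0) (dz : q⁻¹*z⁻¹ - q*z ≠ 0)
    (dxz : q⁻¹*(x*z)⁻¹ - q*(x*z) ≠ 0) :
    R12 q x * R13 q (x*z) * R23 q z = R23 q z * R13 q (x*z) * R12 q x := by
  rw [R12_eq q x hq hx dx, R23_eq q z hq hz dz,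
      R13_eq q (x*z) hq (mul_ne_zero hx hz) dxz]
  simp only [smul_mul_assoc, mul_smul_comm, smul_smul]
  rw [s_ybe]
  congr 1
  ring

/-- The trigonometric R-matrix satisfies the parameter-dependent Yang–Baxter
equation on ℂ²⊗ℂ²⊗ℂ². -/
theorem yang_baxter_equation (q lam lam' lam'' : ℂ) (hq : q ≠ 0)
    (h1 : lam ≠ 0) (h2 : lam' ≠ 0) (h3 : lam'' ≠ 0)
    (hd12 : q⁻¹ * (lam / lam')⁻¹ - q * (lam / lam') ≠ 0)
    (hd13 : q⁻¹ * (lam / lam'')⁻¹ - q * (lam / lam'') ≠ 0)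
    (hd23 : q⁻¹ * (lam' / lam'')⁻¹ - q * (lam' / lam'') ≠ 0) :
    R12 q (lam / lam') * R13 q (lam / lam'') * R23 q (lam' / lam'')
      = R23 q (lam' / lam'') * R13 q (lam / lam'') * R12 q (lam / lam') := by
  have hx : lam / lam' ≠ 0 := div_ne_zero h1 h2
  have hz : lam' / lam'' ≠ 0 := div_ne_zero h2 h3
  have hxz : lam / lam' * (lam' / lam'') = lam / lam'' := by
    field_simp
  have h := ybe_aux q (lam / lam') (lam' / lam'') hq hx hz hd12 hd23
    (by rw [hxz]; exact hd13)
  rw [hxz] at h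
  exact h
end
end
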